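/- Let r ≥ 1 and δ ≥ 1 be integers, and let H be a nonempty r-uniform hypergraph such that every (r−1)-element subset of vertices contained in at least one edge is contained in at least δ edges. Then the (r−1)-shadow satisfies |∂_{r−1}(H)| ≥ C(r + δ − 1, r − 1). -/

import Mathlib

open Finset

/-- The `m`-shadow of a hypergraph: all `m`-element vertex subsets contained in some edge. -/
def hyperShadow {α : Type*} [DecidableEq α] (m : ℕ) (H : Finset (Finset α)) :
    Finset (Finset α) :=
  H.sup fun e => e.powersetCard m

/-!
Splitting the edges of a `(t+1)`-uniform family at a vertex `v` into those containing `v` (whose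
link is `t`-uniform with the same minimum positive codegree `d`) and those avoiding `v` (where
minimum positive codegrees drop by at most one, and which exist once `d ≥ 2`), Pascal's rule gives
at least `(d + t).choose (t + 1)` edges by induction. The `(r-1)`-shadow of an `r`-uniform family of
minimum positive codegree `δ` is `(r-1)`-uniform of minimum positive codegree `δ + 1`: if
`F = insert x W` lies in the edges `e₁, …, e_δ`, then `W` lies in `F` and in the distinct shadow
sets `eᵢ.erase x`. The first bound applied to the shadow gives `(δ + r - 1).choose (r - 1)`.
-/

section

variable {α : Type*} [DecidableEq α]

def PosCodegreeAtLeast (H : Finset (Finset α)) (t d : ℕ) : Prop :=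
  ∀ U : Finset α, U.card = t → (H.filter fun e => U ⊆ e).Nonempty →
    d ≤ (H.filter fun e => U ⊆ e).card

section Link

variable {H : Finset (Finset α)} {U : Finset α} {t d : ℕ} {v : α}

lemma card_filter_memberSubfamily (hv : v ∉ U) :
    #((H.memberSubfamily v).filter fun s => U ⊆ s) = #(H.filter fun e => insert v U ⊆ e) := by
  refine card_nbij' (insert v) (erase · v) ?_ ?_ ?_ ?_
  · intro s hs
    obtain ⟨hs, hUs⟩ := mem_filter.1 hs
    exact mem_filter.2 ⟨(mem_memberSubfamily.1 hs).1, insert_subset_insert v hUs⟩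
  · intro e he
    obtain ⟨he, hve, hUe⟩ := And.imp_right insert_subset_iff.1 (mem_filter.1 he)
    refine mem_filter.2 ⟨mem_memberSubfamily.2 ⟨?_, notMem_erase v e⟩, subset_erase.2 ⟨hUe, hv⟩⟩
    rwa [insert_erase hve]
  · intro s hs
    exact erase_insert (mem_memberSubfamily.1 (mem_filter.1 hs).1).2
  · intro e he
    exact insert_erase (insert_subset_iff.1 (mem_filter.1 he).2).1

lemma PosCodegreeAtLeast.memberSubfamily (h : PosCodegreeAtLeast H (t + 1) d) :
    PosCodegreeAtLeast (H.memberSubfamily v) t d := by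
  rintro U hU ⟨s, hs⟩
  obtain ⟨hs, hUs⟩ := mem_filter.1 hs
  have hv : v ∉ U := fun hvU => (mem_memberSubfamily.1 hs).2 (hUs hvU)
  rw [card_filter_memberSubfamily hv]
  refine h _ (by rw [card_insert_of_notMem hv, hU]) ⟨insert v s, ?_⟩
  exact mem_filter.2 ⟨(mem_memberSubfamily.1 hs).1, insert_subset_insert v hUs⟩

/-- In a `(t+1)`-uniform family the only edge containing a `t`-set `U` and a vertex `v ∉ U` is
`insert v U`. -/
lemma card_filter_le_card_filter_nonMemberSubfamily_add_one
    (hH : (H : Set (Finset α)).Sized (t + 1)) (hU : U.card = t) (hv : v ∉ U) :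
    #(H.filter fun e => U ⊆ e) ≤ #((H.nonMemberSubfamily v).filter fun e => U ⊆ e) + 1 := by
  have hsub : (H.filter fun e => U ⊆ e) ⊆
      insert (insert v U) ((H.nonMemberSubfamily v).filter fun e => U ⊆ e) := by
    intro e he
    obtain ⟨heH, hUe⟩ := mem_filter.1 he
    by_cases hve : v ∈ e
    · refine mem_insert.2 (Or.inl (eq_of_subset_of_card_le (insert_subset hve hUe) ?_).symm)
      rw [card_insert_of_notMem hv, hU, hH heH]
    · exact mem_insert_of_mem (mem_filter.2 ⟨mem_nonMemberSubfamily.2 ⟨heH, hve⟩, hUe⟩)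
  exact (card_le_card hsub).trans (card_insert_le _ _)

lemma PosCodegreeAtLeast.nonMemberSubfamily (hH : (H : Set (Finset α)).Sized (t + 1))
    (h : PosCodegreeAtLeast H t (d + 1)) :
    PosCodegreeAtLeast (H.nonMemberSubfamily v) t d := by
  rintro U hU ⟨e, he⟩
  obtain ⟨he, hUe⟩ := mem_filter.1 he
  have hv : v ∉ U := fun hvU => (mem_nonMemberSubfamily.1 he).2 (hUe hvU)
  have := h U hU ⟨e, mem_filter.2 ⟨(mem_nonMemberSubfamily.1 he).1, hUe⟩⟩
  have := card_filter_le_card_filter_nonMemberSubfamily_add_one hH hU hv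
  omega

lemma nonMemberSubfamily_nonempty (hH : (H : Set (Finset α)).Sized (t + 1))
    (h : PosCodegreeAtLeast H t d) (hd : 2 ≤ d) {e : Finset α} (he : e ∈ H) (hv : v ∈ e) :
    (H.nonMemberSubfamily v).Nonempty := by
  have hU : (e.erase v).card = t := by rw [card_erase_of_mem hv, hH he, Nat.add_sub_cancel]
  have hcodeg := h _ hU ⟨e, mem_filter.2 ⟨he, erase_subset v e⟩⟩
  have := card_filter_le_card_filter_nonMemberSubfamily_add_one hH hU (notMem_erase v e)
  have hpos : 0 < #((H.nonMemberSubfamily v).filter fun s => e.erase v ⊆ s) := by omega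
  exact (card_pos.1 hpos).mono (filter_subset _ _)

end Link

theorem choose_le_card_of_posCodegreeAtLeast :
    ∀ {t d : ℕ} {H : Finset (Finset α)}, (H : Set (Finset α)).Sized (t + 1) → H.Nonempty →
      PosCodegreeAtLeast H t d → (d + t).choose (t + 1) ≤ #H
  | 0, d, H, _, hne, h => by
    have hall : (H.filter fun e => ∅ ⊆ e) = H := filter_true_of_mem fun e _ => empty_subset e
    simpa [hall] using h ∅ card_empty (by rwa [hall])
  | _ + 1, 0, _, _, _, _ => by simp
  | t + 1, d + 1, H, hH, ⟨e, he⟩, h => by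
    obtain ⟨v, hv⟩ : e.Nonempty := card_pos.1 (by rw [hH he]; omega)
    have hmember : (d + 1 + t).choose (t + 1) ≤ #(H.memberSubfamily v) := by
      refine choose_le_card_of_posCodegreeAtLeast ?_ ⟨e.erase v, ?_⟩ h.memberSubfamily
      · intro s hs
        have := hH (mem_memberSubfamily.1 hs).1
        rw [card_insert_of_notMem (mem_memberSubfamily.1 hs).2] at this
        omega
      · rw [mem_memberSubfamily, insert_erase hv]
        exact ⟨he, notMem_erase v e⟩
    have hnonMember : (d + (t + 1)).choose (t + 2) ≤ #(H.nonMemberSubfamily v) := by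
      rcases Nat.eq_zero_or_pos d with rfl | hd
      · simp
      exact choose_le_card_of_posCodegreeAtLeast (fun s hs => hH (mem_filter.1 hs).1)
        (nonMemberSubfamily_nonempty hH h (by omega) he hv) (h.nonMemberSubfamily hH)
    calc (d + 1 + (t + 1)).choose (t + 1 + 1)
        = (d + 1 + t).choose (t + 1) + (d + (t + 1)).choose (t + 2) := by
          rw [show d + 1 + (t + 1) = d + 1 + t + 1 by omega, Nat.choose_succ_succ',
            show d + 1 + t = d + (t + 1) by omega]
      _ ≤ #(H.memberSubfamily v) + #(H.nonMemberSubfamily v) := add_le_add hmember hnonMember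
      _ = #H := card_memberSubfamily_add_card_nonMemberSubfamily v H
termination_by t d => (t, d)

section Shadow

variable {H : Finset (Finset α)} {m : ℕ}

lemma mem_hyperShadow {F : Finset α} : F ∈ hyperShadow m H ↔ ∃ e ∈ H, F ⊆ e ∧ F.card = m := by
  simp [hyperShadow, mem_sup, mem_powersetCard]

lemma sized_hyperShadow : (hyperShadow m H : Set (Finset α)).Sized m := fun _ hF =>
  (mem_hyperShadow.1 hF).choose_spec.2.2

lemma hyperShadow_nonempty {r : ℕ} (hH : (H : Set (Finset α)).Sized r) (hne : H.Nonempty)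
    (hm : m ≤ r) : (hyperShadow m H).Nonempty := by
  obtain ⟨e, he⟩ := hne
  obtain ⟨F, hFe, hF⟩ := exists_subset_card_eq (hm.trans (hH he).ge)
  exact ⟨F, mem_hyperShadow.2 ⟨e, he, hFe, hF⟩⟩

lemma card_filter_add_one_le_card_filter_hyperShadow (hH : (H : Set (Finset α)).Sized (m + 2))
    {W F : Finset α} (hF : F ∈ hyperShadow (m + 1) H) (hWF : W ⊆ F) (hW : W.card = m) :
    #(H.filter fun e => F ⊆ e) + 1 ≤ #((hyperShadow (m + 1) H).filter fun S => W ⊆ S) := by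
  obtain ⟨x, hxW, rfl⟩ := exists_eq_insert_iff.2 ⟨hWF, by rw [hW, sized_hyperShadow hF]⟩
  have hmaps : Set.MapsTo (erase · x) (H.filter fun e => insert x W ⊆ e)
      ((hyperShadow (m + 1) H).filter fun S => W ⊆ S) := by
    intro e he
    obtain ⟨heH, hxWe⟩ := mem_filter.1 he
    have hxe := (insert_subset_iff.1 hxWe).1
    refine mem_filter.2 ⟨mem_hyperShadow.2 ⟨e, heH, erase_subset x e, ?_⟩,
      subset_erase.2 ⟨(subset_insert x W).trans hxWe, hxW⟩⟩
    rw [card_erase_of_mem hxe, hH heH]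
    rfl
  have hinj : Set.InjOn (erase · x) (H.filter fun e => insert x W ⊆ e) := fun a ha b hb =>
    erase_injOn' x (insert_subset_iff.1 (mem_filter.1 ha).2).1
      (insert_subset_iff.1 (mem_filter.1 hb).2).1
  have hnew : insert x W ∉ (H.filter fun e => insert x W ⊆ e).image (erase · x) := by
    simp only [mem_image, not_exists, not_and]
    intro e _ hxe
    exact notMem_erase x e (hxe ▸ mem_insert_self x W)
  calc #(H.filter fun e => insert x W ⊆ e) + 1
      = #(insert (insert x W) ((H.filter fun e => insert x W ⊆ e).image (erase · x))) := by
        rw [card_insert_of_notMem hnew, card_image_of_injOn hinj]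
    _ ≤ _ := card_le_card (insert_subset (mem_filter.2 ⟨hF, subset_insert x W⟩)
        (image_subset_iff.2 hmaps))

lemma PosCodegreeAtLeast.hyperShadow {δ : ℕ} (hH : (H : Set (Finset α)).Sized (m + 2))
    (h : PosCodegreeAtLeast H (m + 1) δ) :
    PosCodegreeAtLeast (hyperShadow (m + 1) H) m (δ + 1) := by
  rintro W hW ⟨F, hF⟩
  obtain ⟨hF, hWF⟩ := mem_filter.1 hF
  obtain ⟨e, he, hFe, hFcard⟩ := mem_hyperShadow.1 hF
  have := h F hFcard ⟨e, mem_filter.2 ⟨he, hFe⟩⟩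
  have := card_filter_add_one_le_card_filter_hyperShadow hH hF hWF hW
  omega

end Shadow

end

theorem shadow_lower_bound_of_min_codegree_general {α : Type*} [DecidableEq α]
    (r δ : ℕ)
    (H : Finset (Finset α)) (hne : H.Nonempty)
    (hunif : ∀ e ∈ H, e.card = r)
    (hcodeg : ∀ U : Finset α, U.card = r - 1 →
      (H.filter fun e => U ⊆ e).Nonempty → δ ≤ (H.filter fun e => U ⊆ e).card) :
    (r + δ - 1).choose (r - 1) ≤ (hyperShadow (r - 1) H).card := by
  have hH : (H : Set (Finset α)).Sized r := hunif
  have hS := hyperShadow_nonempty hH hne (Nat.sub_le r 1)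
  obtain ⟨t, rfl⟩ | hr : (∃ t, r = t + 2) ∨ r - 1 = 0 := by
    rcases r with _ | _ | t <;> simp
  · have := choose_le_card_of_posCodegreeAtLeast sized_hyperShadow hS
      ((show PosCodegreeAtLeast H (t + 1) δ from hcodeg).hyperShadow hH)
    rwa [show t + 2 + δ - 1 = δ + 1 + t by omega]
  · rw [hr] at hS ⊢
    exact (Nat.choose_zero_right _).trans_le (card_pos.2 hS)

theorem shadow_lower_bound_of_min_codegree {α : Type*} [DecidableEq α]
    (r δ : ℕ) (hr : 1 ≤ r) (hδ : 1 ≤ δ)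
    (H : Finset (Finset α)) (hne : H.Nonempty)
    (hunif : ∀ e ∈ H, e.card = r)
    (hcodeg : ∀ U : Finset α, U.card = r - 1 →
      (H.filter fun e => U ⊆ e).Nonempty → δ ≤ (H.filter fun e => U ⊆ e).card) :
    (r + δ - 1).choose (r - 1) ≤ (hyperShadow (r - 1) H).card :=
  shadow_lower_bound_of_min_codegree_general r δ H hne hunif hcodeg
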